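/- Let α = (α₁,α₂), β = (β₁,β₂) with α₁, α₂, β₁, β₂ > 0, let λ₁, λ₂ > 0, and let f ∈ L¹(ℝ²). Then the semigroup property holds: for almost every (t,s) ∈ ℝ², 𝕀₊^{α,λ}(𝕀₊^{β,λ}f)(t,s) = 𝕀₊^{α+β,λ}f(t,s), and likewise 𝕀₋^{α,λ}(𝕀₋^{β,λ}f)(t,s) = 𝕀₋^{α+β,λ}f(t,s), where α+β = (α₁+β₁, α₂+β₂). -/

import Mathlib

open MeasureTheory

/-- The tempered power kernel: `x ^ p * exp (-(lam * x))` for `x > 0`, and `0` otherwise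
(so `x₊ ^ p` is interpreted as `0` when `x ≤ 0`). -/
noncomputable def tk (p lam x : ℝ) : ℝ := if 0 < x then x ^ p * Real.exp (-(lam * x)) else 0

/-- The left (positive) two-parameter tempered fractional integral
`𝕀₊^{α,λ}f(t,s) = (Γ(α₁)Γ(α₂))⁻¹ ∫_{ℝ²} (t−u)₊^{α₁−1} e^{−λ₁(t−u)₊} (s−v)₊^{α₂−1}
e^{−λ₂(s−v)₊} f(u,v) du dv`. -/
noncomputable def Ip (a1 a2 l1 l2 : ℝ) (f : ℝ × ℝ → ℝ) (t s : ℝ) : ℝ :=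
  (Real.Gamma a1 * Real.Gamma a2)⁻¹ *
    ∫ u : ℝ × ℝ, tk (a1 - 1) l1 (t - u.1) * tk (a2 - 1) l2 (s - u.2) * f u

/-- The right (negative) two-parameter tempered fractional integral
`𝕀₋^{α,λ}f(t,s) = (Γ(α₁)Γ(α₂))⁻¹ ∫_{ℝ²} (u−t)₊^{α₁−1} e^{−λ₁(u−t)₊} (v−s)₊^{α₂−1}
e^{−λ₂(v−s)₊} f(u,v) du dv`. -/
noncomputable def Im (a1 a2 l1 l2 : ℝ) (f : ℝ × ℝ → ℝ) (t s : ℝ) : ℝ :=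
  (Real.Gamma a1 * Real.Gamma a2)⁻¹ *
    ∫ u : ℝ × ℝ, tk (a1 - 1) l1 (u.1 - t) * tk (a2 - 1) l2 (u.2 - s) * f u


/-!
Both integrals are convolutions: `𝕀₊^{α,λ} f = K_α ⋆ f` and `𝕀₋^{α,λ} f = K̃_α ⋆ f`, where
`K_α(x) = ∏ᵢ (xᵢ)₊^{αᵢ-1} e^{-λᵢ xᵢ} / Γ(αᵢ)` and `K̃_α(x) = K_α(-x)`. The kernel factors over the
coordinates, and in each coordinate the exponentials combine to `e^{-λ x}`, so the Beta integral
gives `K_α ⋆ K_β = K_{α+β}`; reflecting preserves this. The claim is then associativity of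
convolution, which holds almost everywhere for integrable functions by Fubini.
-/

open Set
open scoped Convolution

section Convolution

variable {𝕜 G : Type*} [MeasurableSpace G]

theorem convolution_comp_neg [NontriviallyNormedField 𝕜] {E E' F : Type*}
    [NormedAddCommGroup E] [NormedAddCommGroup E']
    [NormedAddCommGroup F] [NormedSpace 𝕜 E] [NormedSpace 𝕜 E'] [NormedSpace 𝕜 F] [NormedSpace ℝ F]
    [AddCommGroup G] [MeasurableNeg G] (L : E →L[𝕜] E' →L[𝕜] F) (μ : Measure G)
    [μ.IsNegInvariant] (f : G → E) (g : G → E') :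
    (fun x => f (-x)) ⋆[L, μ] (fun x => g (-x)) = fun x => (f ⋆[L, μ] g) (-x) := by
  ext x
  simp only [convolution_def]
  rw [← integral_neg_eq_self]
  simp only [neg_neg, sub_neg_eq_add, neg_add']

theorem convolution_prod_mul [RCLike 𝕜] {H : Type*} [AddGroup G] [AddGroup H] [MeasurableSpace H]
    (μ : Measure G) (ν : Measure H) [SFinite μ] [SFinite ν] (f₁ g₁ : G → 𝕜) (f₂ g₂ : H → 𝕜) :
    (fun x : G × H => f₁ x.1 * f₂ x.2) ⋆[.mul 𝕜 𝕜, μ.prod ν] (fun x => g₁ x.1 * g₂ x.2)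
      = fun x => (f₁ ⋆[.mul 𝕜 𝕜, μ] g₁) x.1 * (f₂ ⋆[.mul 𝕜 𝕜, ν] g₂) x.2 := by
  ext x
  simp only [convolution_def, ContinuousLinearMap.mul_apply', Prod.fst_sub, Prod.snd_sub]
  rw [← integral_prod_mul]
  congr 1 with y
  ring

theorem MeasureTheory.Integrable.ae_convolution_assoc [RCLike 𝕜] [AddGroup G]
    [MeasurableAdd₂ G] [MeasurableNeg G] {μ : Measure G} [SFinite μ] [μ.IsAddRightInvariant]
    {f g k : G → 𝕜} (hf : Integrable f μ) (hg : Integrable g μ) (hk : Integrable k μ) :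
    ∀ᵐ x ∂μ, ((f ⋆[.mul 𝕜 𝕜, μ] g) ⋆[.mul 𝕜 𝕜, μ] k) x
      = (f ⋆[.mul 𝕜 𝕜, μ] (g ⋆[.mul 𝕜 𝕜, μ] k)) x := by
  have hgk : Integrable ((fun x => ‖g x‖) ⋆[.mul ℝ ℝ, μ] fun x => ‖k x‖) μ :=
    hg.norm.integrable_convolution (.mul ℝ ℝ) hk.norm
  filter_upwards [hf.norm.ae_convolution_exists (.mul ℝ ℝ) hgk] with x hx
  exact convolution_assoc _ _ _ _ mul_assoc hf.aestronglyMeasurable hg.aestronglyMeasurable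
    hk.aestronglyMeasurable (hf.ae_convolution_exists _ hg)
    (hg.norm.ae_convolution_exists _ hk.norm) hx

end Convolution

section TemperedKernel

open Real

theorem tk_of_pos {p lam x : ℝ} (hx : 0 < x) : tk p lam x = x ^ p * exp (-(lam * x)) :=
  if_pos hx

theorem tk_of_nonpos {p lam x : ℝ} (hx : x ≤ 0) : tk p lam x = 0 :=
  if_neg hx.not_gt

theorem integrable_tk {p lam : ℝ} (hp : -1 < p) (hlam : 0 < lam) : Integrable (tk p lam) := by
  have h : tk p lam = (Ioi 0).indicator fun x => x ^ p * exp (-(lam * x)) := by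
    ext x
    simp only [tk, indicator, mem_Ioi]
  rw [h, integrable_indicator_iff measurableSet_Ioi]
  simpa [rpow_one] using integrableOn_rpow_mul_exp_neg_mul_rpow hp one_pos hlam

theorem integral_rpow_mul_sub_rpow {a b x : ℝ} (ha : 0 < a) (hb : 0 < b) (hx : 0 < x) :
    ∫ y in 0..x, y ^ (a - 1) * (x - y) ^ (b - 1)
      = Gamma a * Gamma b / Gamma (a + b) * x ^ (a + b - 1) := by
  have hbeta := Complex.betaIntegral_scaled a b hx
  rw [Complex.betaIntegral_eq_Gamma_mul_div _ _ (by simpa) (by simpa)] at hbeta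
  apply Complex.ofReal_injective
  rw [← intervalIntegral.integral_ofReal]
  have hcast : ∫ y in 0..x, ((y ^ (a - 1) * (x - y) ^ (b - 1) : ℝ) : ℂ)
      = ∫ y in 0..x, (y : ℂ) ^ ((a : ℂ) - 1) * ((x : ℂ) - y) ^ ((b : ℂ) - 1) := by
    refine intervalIntegral.integral_congr fun y hy => ?_
    rw [uIcc_of_le hx.le] at hy
    rw [Complex.ofReal_mul, Complex.ofReal_cpow hy.1, Complex.ofReal_cpow (sub_nonneg.2 hy.2)]
    push_cast
    rfl
  rw [hcast, hbeta]
  push_cast [Complex.ofReal_cpow hx.le, ← Complex.Gamma_ofReal]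
  ring

theorem integral_tk_mul_tk_sub {a b : ℝ} (ha : 0 < a) (hb : 0 < b) (lam x : ℝ) :
    ∫ y, tk (a - 1) lam y * tk (b - 1) lam (x - y)
      = Gamma a * Gamma b / Gamma (a + b) * tk (a + b - 1) lam x := by
  rcases le_or_gt x 0 with hx | hx
  · have h0 : ∀ y, tk (a - 1) lam y * tk (b - 1) lam (x - y) = 0 := by
      intro y
      rcases le_or_gt y 0 with hy | hy
      · rw [tk_of_nonpos hy, zero_mul]
      · rw [tk_of_nonpos (x := x - y) (by linarith), mul_zero]
    simp only [h0, integral_zero, tk_of_nonpos hx, mul_zero]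
  -- `Ioo`, not `Ioc`: at `y = x` the kernel `tk` vanishes, but `0 ^ (b - 1) = 1` when `b = 1`.
  · have h : (fun y => tk (a - 1) lam y * tk (b - 1) lam (x - y))
        = (Ioo 0 x).indicator fun y => exp (-(lam * x)) * (y ^ (a - 1) * (x - y) ^ (b - 1)) := by
      ext y
      by_cases hy : y ∈ Ioo 0 x
      · have hexp : exp (-(lam * x)) = exp (-(lam * y)) * exp (-(lam * (x - y))) := by
          rw [← exp_add]
          ring_nf
        rw [indicator_of_mem hy, tk_of_pos hy.1, tk_of_pos (sub_pos.2 hy.2), hexp]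
        ring
      · rw [indicator_of_notMem hy]
        rcases le_or_gt y 0 with hy0 | hy0
        · rw [tk_of_nonpos hy0, zero_mul]
        · have hxy : x ≤ y := not_lt.1 fun hyx => hy ⟨hy0, hyx⟩
          rw [tk_of_nonpos (x := x - y) (sub_nonpos.2 hxy), mul_zero]
    rw [h, integral_indicator measurableSet_Ioo, integral_const_mul, ← integral_Ioc_eq_integral_Ioo,
      ← intervalIntegral.integral_of_le hx.le, integral_rpow_mul_sub_rpow ha hb hx,
      tk_of_pos hx]
    ring

noncomputable def gammaKernel (a lam x : ℝ) : ℝ := tk (a - 1) lam x / Gamma a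

theorem integrable_gammaKernel {a lam : ℝ} (ha : 0 < a) (hlam : 0 < lam) :
    Integrable (gammaKernel a lam) :=
  (integrable_tk (by linarith) hlam).div_const _

theorem gammaKernel_convolution {a b : ℝ} (ha : 0 < a) (hb : 0 < b) (lam : ℝ) :
    gammaKernel a lam ⋆[.mul ℝ ℝ] gammaKernel b lam = gammaKernel (a + b) lam := by
  ext x
  have hΓa := (Gamma_pos_of_pos ha).ne'
  have hΓb := (Gamma_pos_of_pos hb).ne'
  have hΓab := (Gamma_pos_of_pos (add_pos ha hb)).ne'
  simp only [convolution_def, ContinuousLinearMap.mul_apply', gammaKernel, div_mul_div_comm,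
    integral_div, integral_tk_mul_tk_sub ha hb, add_sub_assoc]
  field_simp

noncomputable def temperedKernel (a1 a2 l1 l2 : ℝ) : ℝ × ℝ → ℝ :=
  fun x => gammaKernel a1 l1 x.1 * gammaKernel a2 l2 x.2

theorem integrable_temperedKernel {a1 a2 l1 l2 : ℝ} (ha1 : 0 < a1) (ha2 : 0 < a2)
    (hl1 : 0 < l1) (hl2 : 0 < l2) : Integrable (temperedKernel a1 a2 l1 l2) :=
  (integrable_gammaKernel ha1 hl1).mul_prod (integrable_gammaKernel ha2 hl2)

theorem temperedKernel_convolution {a1 a2 b1 b2 : ℝ} (ha1 : 0 < a1) (ha2 : 0 < a2)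
    (hb1 : 0 < b1) (hb2 : 0 < b2) (l1 l2 : ℝ) :
    temperedKernel a1 a2 l1 l2 ⋆[.mul ℝ ℝ] temperedKernel b1 b2 l1 l2
      = temperedKernel (a1 + b1) (a2 + b2) l1 l2 := by
  unfold temperedKernel
  rw [Measure.volume_eq_prod, convolution_prod_mul,
    gammaKernel_convolution ha1 hb1, gammaKernel_convolution ha2 hb2]

theorem Ip_eq_convolution (a1 a2 l1 l2 : ℝ) (f : ℝ × ℝ → ℝ) (t s : ℝ) :
    Ip a1 a2 l1 l2 f t s = (temperedKernel a1 a2 l1 l2 ⋆[.mul ℝ ℝ] f) (t, s) := by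
  rw [Ip, convolution_mul_swap, ← integral_const_mul]
  congr 1 with u
  simp only [temperedKernel, gammaKernel, Prod.fst_sub, Prod.snd_sub]
  ring

theorem Im_eq_convolution (a1 a2 l1 l2 : ℝ) (f : ℝ × ℝ → ℝ) (t s : ℝ) :
    Im a1 a2 l1 l2 f t s = ((fun x => temperedKernel a1 a2 l1 l2 (-x)) ⋆[.mul ℝ ℝ] f) (t, s) := by
  rw [Im, convolution_mul_swap, ← integral_const_mul]
  congr 1 with u
  simp only [temperedKernel, gammaKernel, neg_sub, Prod.fst_sub, Prod.snd_sub]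
  ring

end TemperedKernel

/-- semigroup property of the two-parameter tempered fractional integrals:
for `f ∈ L¹(ℝ²)`, almost everywhere `𝕀₊^{α,λ}(𝕀₊^{β,λ}f) = 𝕀₊^{α+β,λ}f` and
`𝕀₋^{α,λ}(𝕀₋^{β,λ}f) = 𝕀₋^{α+β,λ}f`. -/
theorem tempered_fractional_integral_semigroup (a1 a2 b1 b2 l1 l2 : ℝ)
    (ha1 : 0 < a1) (ha2 : 0 < a2) (hb1 : 0 < b1) (hb2 : 0 < b2)
    (hl1 : 0 < l1) (hl2 : 0 < l2) (f : ℝ × ℝ → ℝ) (hf : Integrable f) :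
    (∀ᵐ p : ℝ × ℝ,
        Ip a1 a2 l1 l2 (fun u => Ip b1 b2 l1 l2 f u.1 u.2) p.1 p.2
          = Ip (a1 + b1) (a2 + b2) l1 l2 f p.1 p.2) ∧
    (∀ᵐ p : ℝ × ℝ,
        Im a1 a2 l1 l2 (fun u => Im b1 b2 l1 l2 f u.1 u.2) p.1 p.2
          = Im (a1 + b1) (a2 + b2) l1 l2 f p.1 p.2) := by
  have hKa := integrable_temperedKernel ha1 ha2 hl1 hl2
  have hKb := integrable_temperedKernel hb1 hb2 hl1 hl2
  constructor
  · filter_upwards [hKa.ae_convolution_assoc hKb hf] with p hp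
    simp only [Ip_eq_convolution, Prod.mk.eta]
    rw [← hp, temperedKernel_convolution ha1 ha2 hb1 hb2]
  · filter_upwards [hKa.comp_neg.ae_convolution_assoc hKb.comp_neg hf] with p hp
    simp only [Im_eq_convolution, Prod.mk.eta]
    rw [← hp, convolution_comp_neg, temperedKernel_convolution ha1 ha2 hb1 hb2]
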